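/- Let θ be inner and g ∈ L^∞(T) with ker A_g^θ ≠ {0}, and write ker A_g^θ = w₁·K_{zΦ} where (w₁,w₂)ᵀ is the normalized element of ker T_G ⊖ (ker T_G ∩ zH²(D,C²)) for G = [[conj(θ),0],[g,θ]] and Φ is the associated inner function. Then ker A_g^θ is nearly S*-invariant with defect space span{w₁/z} ∩ H²; in particular, ker A_g^θ is nearly S*-invariant with defect at most 1. -/

import Mathlib

open MeasureTheory Complex Real
open scoped ENNReal ComplexConjugate

noncomputable section

namespace Paper

instance : Fact (0 < 2 * Real.pi) := ⟨by positivity⟩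

abbrev Tc : Type := AddCircle (2 * Real.pi)
abbrev μ0 : MeasureTheory.Measure Tc := AddCircle.haarAddCircle
abbrev L2 : Type := MeasureTheory.Lp ℂ 2 μ0

def coeffCLM (n : ℤ) : L2 →L[ℂ] ℂ :=
  LinearMap.mkContinuous
    { toFun := fun f => fourierBasis.repr f n
      map_add' := fun f g => by simp
      map_smul' := fun c f => by simp }
    1
    (fun f => by
      have h := lp.norm_apply_le_norm (p := 2) (by norm_num) (fourierBasis.repr f) n
      simpa using h)

def cf (f : L2) (n : ℤ) : ℂ := coeffCLM n f

/-- The subspace of `L²(𝕋)` of functions whose Fourier coefficients of index `< k` vanish.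
Thus `coeffGE 0 = H²` and `coeffGE k = zᵏH²` for `k ≥ 0`. -/
def coeffGE (k : ℤ) : Submodule ℂ L2 :=
  ⨅ (n : ℤ) (_ : n < k), LinearMap.ker (coeffCLM n : L2 →ₗ[ℂ] ℂ)

/-- The subspace of `L²(𝕋)` of functions whose Fourier coefficients of index `≥ k` vanish.
Thus `coeffLT 0 = conj (H²₀) = (H²)^⊥`. -/
def coeffLT (k : ℤ) : Submodule ℂ L2 :=
  ⨅ (n : ℤ) (_ : k ≤ n), LinearMap.ker (coeffCLM n : L2 →ₗ[ℂ] ℂ)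

/-- The Hardy space `H²` of the unit disc, viewed as a subspace of `L²(𝕋)`. -/
def H2 : Submodule ℂ L2 := coeffGE 0

lemma mem_coeffGE {k : ℤ} {f : L2} : f ∈ coeffGE k ↔ ∀ n < k, cf f n = 0 := by
  simp [coeffGE, cf, Submodule.mem_iInf, LinearMap.mem_ker]

lemma isClosed_coeffGE (k : ℤ) : IsClosed ((coeffGE k : Submodule ℂ L2) : Set L2) := by
  have h : ((coeffGE k : Submodule ℂ L2) : Set L2)
      = ⋂ (n : ℤ) (_ : n < k), (LinearMap.ker (coeffCLM n : L2 →ₗ[ℂ] ℂ) : Set L2) := by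
    ext f
    simp [coeffGE, Submodule.mem_iInf, Set.mem_iInter]
  rw [h]
  exact isClosed_iInter fun n => isClosed_iInter fun _ => ContinuousLinearMap.isClosed_ker (coeffCLM n)

end Paper
namespace Paper

open scoped Classical in
/-- Multiplication by an `L^∞` function, as a linear map on `L²(𝕋)` (defined to be `0` if the
symbol is not essentially bounded). -/
def mulLM (g : Tc → ℂ) : L2 →ₗ[ℂ] L2 :=
  if hg : MemLp g ⊤ μ0 then
    { toFun := fun f => ((MemLp.smul (r := 2) (Lp.memLp f) hg)).toLp (g • ⇑f)
      map_add' := fun f₁ f₂ => by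
        apply Lp.ext
        filter_upwards [MemLp.coeFn_toLp ((MemLp.smul (r := 2) (Lp.memLp (f₁ + f₂)) hg)),
          MemLp.coeFn_toLp ((MemLp.smul (r := 2) (Lp.memLp f₁) hg)),
          MemLp.coeFn_toLp ((MemLp.smul (r := 2) (Lp.memLp f₂) hg)),
          Lp.coeFn_add f₁ f₂,
          Lp.coeFn_add (((MemLp.smul (r := 2) (Lp.memLp f₁) hg)).toLp (g • ⇑f₁))
            (((MemLp.smul (r := 2) (Lp.memLp f₂) hg)).toLp (g • ⇑f₂))] with x h0 h1 h2 h3 h4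
        rw [h0, h4, Pi.add_apply, h1, h2]
        simp only [Pi.smul_apply', Pi.add_apply, h3, smul_add]
      map_smul' := fun c f => by
        apply Lp.ext
        filter_upwards [MemLp.coeFn_toLp ((MemLp.smul (r := 2) (Lp.memLp (c • f)) hg)),
          MemLp.coeFn_toLp ((MemLp.smul (r := 2) (Lp.memLp f) hg)),
          Lp.coeFn_smul c f,
          Lp.coeFn_smul c (((MemLp.smul (r := 2) (Lp.memLp f) hg)).toLp (g • ⇑f))] with x h0 h1 h3 h4
        simp only [RingHom.id_apply]
        rw [h0, h4, Pi.smul_apply, h1]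
        simp only [Pi.smul_apply', Pi.smul_apply, h3]
        exact smul_comm _ _ _ }
  else 0

end Paper
namespace Paper

/-- The orthogonal projection of `L²(𝕋)` onto a closed subspace, as a map `L² → L²`. -/
def projCLM (U : Submodule ℂ L2) (hU : IsClosed (U : Set L2)) : L2 →L[ℂ] L2 :=
  letI : CompleteSpace U := hU.completeSpace_coe
  U.subtypeL.comp (U.orthogonalProjectionOnto)

/-- The subspace `θH²` of `L²(𝕋)`. -/
def thetaH2 (θ : Tc → ℂ) : Submodule ℂ L2 := H2.map (mulLM θ)

/-- The model space `K_θ = H² ⊖ θH²`. -/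
def Kmod (θ : Tc → ℂ) : Submodule ℂ L2 := H2 ⊓ (thetaH2 θ)ᗮ

lemma isClosed_Kmod (θ : Tc → ℂ) : IsClosed ((Kmod θ : Submodule ℂ L2) : Set L2) :=
  (isClosed_coeffGE 0).inter (thetaH2 θ).isClosed_orthogonal

/-- The orthogonal projection `P_θ : L² → K_θ` (composed with the inclusion back into `L²`). -/
def Ptheta (θ : Tc → ℂ) : L2 →L[ℂ] L2 := projCLM (Kmod θ) (isClosed_Kmod θ)

/-- The orthogonal projection `P₊ : L² → H²`. -/
def Pplus : L2 →L[ℂ] L2 := projCLM H2 (isClosed_coeffGE 0)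

/-- The independent variable `z = e^{it}`, as a function on the circle. -/
def zf : Tc → ℂ := fun x => fourier 1 x

/-- The conjugate variable `z̄ = e^{-it}`. -/
def zbar : Tc → ℂ := fun x => fourier (-1) x

lemma memLp_fourier (n : ℤ) : MemLp (fun x : Tc => (fourier n x : ℂ)) ⊤ μ0 := by
  refine memLp_top_of_bound ((fourier n).continuous.aestronglyMeasurable) 1 ?_
  exact Filter.Eventually.of_forall fun x => le_of_eq (Circle.norm_coe _)

lemma memLp_zf : MemLp zf ⊤ μ0 := memLp_fourier 1

lemma memLp_zbar : MemLp zbar ⊤ μ0 := memLp_fourier (-1)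

/-- The backward shift `S* : f ↦ (f - f(0))/z`, realised on `L²(𝕋)` as
`f ↦ P₊(z̄ f)`; on `H²` this is the usual backward shift. -/
def Sstar : L2 →ₗ[ℂ] L2 := (Pplus : L2 →ₗ[ℂ] L2).comp (mulLM zbar)

/-- `θ` is an inner function: it is essentially bounded, unimodular a.e. on the circle, and
all its negative Fourier coefficients vanish (i.e. it is the boundary function of a bounded
analytic function on the disc). -/
structure IsInner (θ : Tc → ℂ) : Prop where
  memLinf : MemLp θ ⊤ μ0
  unimodular : ∀ᵐ x ∂μ0, ‖θ x‖ = 1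
  analytic : ∀ n : ℤ, n < 0 → fourierCoeff θ n = 0

/-- Pointwise complex conjugation of a function on the circle. -/
def conjFun (f : Tc → ℂ) : Tc → ℂ := fun x => (starRingEnd ℂ) (f x)

lemma memLp_conj {f : Tc → ℂ} {p : ℝ≥0∞} (hf : MemLp f p μ0) : MemLp (conjFun f) p μ0 := by
  refine ⟨continuous_star.comp_aestronglyMeasurable hf.1, ?_⟩
  have h : eLpNorm (conjFun f) p μ0 = eLpNorm f p μ0 :=
    eLpNorm_congr_norm_ae (Filter.Eventually.of_forall fun x => by
      simp [conjFun])
  rw [h]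
  exact hf.2

/-- Complex conjugation on `L²(𝕋)`. -/
def conjL2 (f : L2) : L2 := (memLp_conj (Lp.memLp f)).toLp (conjFun ⇑f)

end Paper
namespace Paper

/-- The set `w·U = {h ∈ L² : h = w·k (a.e.) for some k ∈ U}`, for a fixed function `w` on the
circle and a subspace `U ⊆ L²`; this is a (not necessarily closed) subspace of `L²`. -/
def mulSet (w : Tc → ℂ) (U : Submodule ℂ L2) : Submodule ℂ L2 where
  carrier := {h : L2 | ∃ k ∈ U, (⇑h : Tc → ℂ) =ᵐ[μ0] fun x => w x * (⇑k : Tc → ℂ) x}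
  add_mem' := by
    rintro a b ⟨k₁, hk₁, ha⟩ ⟨k₂, hk₂, hb⟩
    refine ⟨k₁ + k₂, U.add_mem hk₁ hk₂, ?_⟩
    filter_upwards [ha, hb, Lp.coeFn_add a b, Lp.coeFn_add k₁ k₂] with x h1 h2 h3 h4
    simp only [h3, Pi.add_apply, h1, h2, h4, mul_add]
  zero_mem' := by
    refine ⟨0, U.zero_mem, ?_⟩
    filter_upwards [Lp.coeFn_zero ℂ 2 μ0] with x h1
    simp [h1]
  smul_mem' := by
    rintro c a ⟨k, hk, ha⟩
    refine ⟨c • k, U.smul_mem c hk, ?_⟩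
    filter_upwards [ha, Lp.coeFn_smul c a, Lp.coeFn_smul c k] with x h1 h2 h3
    simp only [h2, Pi.smul_apply, h1, h3, smul_eq_mul]
    ring

/-- `f` is an outer function: `f ∈ H²` and the polynomial multiples of `f` are dense in `H²`
(i.e. `f` is cyclic for the forward shift). -/
def IsOuter (f : L2) : Prop :=
  f ∈ H2 ∧
    (Submodule.span ℂ (Set.range fun k : ℕ => ((mulLM zf) ^ k) f)).topologicalClosure = H2

/-- `h` is a cyclic vector for the backward shift `S*` on `H²`. -/
def CyclicSstar (h : L2) : Prop :=
  (Submodule.span ℂ (Set.range fun k : ℕ => (Sstar ^ k) h)).topologicalClosure = H2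

/-- `d` divides `u` in the sense of inner functions. -/
def InnerDvd (d u : Tc → ℂ) : Prop :=
  ∃ v : Tc → ℂ, IsInner v ∧ ∀ᵐ x ∂μ0, u x = d x * v x

/-- Two inner functions have greatest common inner divisor `1`, i.e. every common inner
divisor is a (necessarily unimodular) constant. -/
def CoprimeInner (u₁ u₂ : Tc → ℂ) : Prop :=
  ∀ d : Tc → ℂ, IsInner d → InnerDvd d u₁ → InnerDvd d u₂ → ∃ c : ℂ, ∀ᵐ x ∂μ0, d x = c

/-- The kernel of the truncated Toeplitz operator `A_g^θ = P_θ (g ·) : K_θ → K_θ`: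
`f ∈ ker A_g^θ` iff `f ∈ K_θ` and `g f ⊥ K_θ`. -/
def kerA (θ g : Tc → ℂ) : Submodule ℂ L2 :=
  Kmod θ ⊓ ((Kmod θ)ᗮ).comap (mulLM g)

/-- The kernel of the dual truncated Toeplitz operator `D_g^θ = Q (g ·) : K_θ^⊥ → K_θ^⊥`:
`f ∈ ker D_g^θ` iff `f ∈ K_θ^⊥` and `g f ⊥ K_θ^⊥`. -/
def kerD (θ g : Tc → ℂ) : Submodule ℂ L2 :=
  (Kmod θ)ᗮ ⊓ (((Kmod θ)ᗮ)ᗮ).comap (mulLM g)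

/-- The space `A = {f ∈ ker D_g^θ : gf ∈ K_θ ∩ zH²}`. -/
def dualA (θ g : Tc → ℂ) : Submodule ℂ L2 :=
  kerD θ g ⊓ (Kmod θ ⊓ coeffGE 1).comap (mulLM g)

/-- The space `C = ker D_g^θ ∩ (conj H²₀ ⊕ θzH²) ∩ A`. -/
def dualC (θ g : Tc → ℂ) : Submodule ℂ L2 :=
  kerD θ g ⊓ (coeffLT 0 ⊔ (coeffGE 1).map (mulLM θ)) ⊓ dualA θ g

end Paper
namespace Paper

/-- The vector-valued space `L²(𝕋, ℂⁿ)`, realised as an `ℓ²`-direct sum of `n` copies of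
`L²(𝕋)`; the subspace `H2v n` below is the vector-valued Hardy space `H²(𝔻, ℂⁿ)`. -/
abbrev Vec (n : ℕ) : Type := PiLp 2 (fun _ : Fin n => L2)

/-- The `i`-th component, as a linear map `L²(𝕋, ℂⁿ) → L²(𝕋)`. -/
def compLM {n : ℕ} (i : Fin n) : Vec n →ₗ[ℂ] L2 where
  toFun F := F i
  map_add' F G := rfl
  map_smul' c F := rfl

/-- Vector-valued analogue of `coeffGE`: `coeffGEv n 0 = H²(𝔻, ℂⁿ)` and
`coeffGEv n 1 = zH²(𝔻, ℂⁿ)`. -/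
def coeffGEv (n : ℕ) (k : ℤ) : Submodule ℂ (Vec n) :=
  ⨅ i : Fin n, (coeffGE k).comap (compLM i)

/-- The vector-valued Hardy space `H²(𝔻, ℂⁿ)`. -/
def H2v (n : ℕ) : Submodule ℂ (Vec n) := coeffGEv n 0

/-- The vector-valued model space `K_θ(𝔻, ℂⁿ)` (all components in `K_θ`). -/
def Kv (θ : Tc → ℂ) (n : ℕ) : Submodule ℂ (Vec n) :=
  ⨅ i : Fin n, (Kmod θ).comap (compLM i)

/-- Evaluation at the origin, `F ↦ F(0)`, for (Hardy-space) elements of `L²(𝕋, ℂⁿ)`. -/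
def ev0 {n : ℕ} (F : Vec n) : EuclideanSpace ℂ (Fin n) := WithLp.toLp 2 (fun i => cf (F i) 0)

/-- Evaluation at the origin as a linear map `H²(𝔻, ℂⁿ) → ℂⁿ`. -/
def ev0LM (n : ℕ) : Vec n →ₗ[ℂ] EuclideanSpace ℂ (Fin n) where
  toFun := ev0
  map_add' _F _G := by
    ext i
    simp [ev0, cf]
  map_smul' _c _F := by
    ext i
    simp [ev0, cf]

/-- The componentwise backward shift on `L²(𝕋, ℂⁿ)`. -/
def SstarV {n : ℕ} : Vec n →ₗ[ℂ] Vec n where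
  toFun F := WithLp.toLp 2 (fun i => Sstar (F i))
  map_add' _F _G := by
    ext i
    simp
  map_smul' _c _F := by
    ext i
    simp

/-- Componentwise multiplication by a scalar `L^∞` function on `L²(𝕋, ℂⁿ)`. -/
def mulVLM (g : Tc → ℂ) {n : ℕ} : Vec n →ₗ[ℂ] Vec n where
  toFun F := WithLp.toLp 2 (fun i => mulLM g (F i))
  map_add' _F _G := by
    ext i
    simp
  map_smul' _c _F := by
    ext i
    simp

/-- The projection onto the first `i` coordinates, `P_i : H²(𝔻, ℂⁿ) → H²(𝔻, ℂⁱ)`. -/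
def projLE {n i : ℕ} (h : i ≤ n) : Vec n →ₗ[ℂ] Vec i where
  toFun F := WithLp.toLp 2 (fun j => F (Fin.castLE h j))
  map_add' F G := rfl
  map_smul' c F := rfl

/-- The `i`-th row of a matrix symbol applied to a vector function:
`F ↦ ∑ j, G i j • F j`. -/
def rowLM {n : ℕ} (G : Matrix (Fin n) (Fin n) (Tc → ℂ)) (i : Fin n) : Vec n →ₗ[ℂ] L2 :=
  ∑ j : Fin n, (mulLM (G i j)).comp (compLM j)

/-- The kernel of the block Toeplitz operator `T_G = P₊(G ·)` on `H²(𝔻, ℂⁿ)`: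
`F ∈ ker T_G` iff `F ∈ H²(𝔻, ℂⁿ)` and every component of `GF` is orthogonal to `H²`. -/
def kerT {n : ℕ} (G : Matrix (Fin n) (Fin n) (Tc → ℂ)) : Submodule ℂ (Vec n) :=
  H2v n ⊓ ⨅ i : Fin n, (H2ᗮ).comap (rowLM G i)

/-- The kernel of the matrix truncated Toeplitz operator `A_G^θ = P_θ(G ·)` on `K_θ(𝔻, ℂ²)`. -/
def kerAv (θ : Tc → ℂ) (G : Matrix (Fin 2) (Fin 2) (Tc → ℂ)) : Submodule ℂ (Vec 2) :=
  Kv θ 2 ⊓ ⨅ i : Fin 2, ((Kmod θ)ᗮ).comap (rowLM G i)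

/-- The scalar-type space `w·U ⊆ L²(𝕋, ℂⁿ)`, for a fixed vector function `w` and a
subspace `U ⊆ L²(𝕋)` of scalar functions. -/
def vecMulSet {n : ℕ} (w : Vec n) (U : Submodule ℂ L2) : Submodule ℂ (Vec n) where
  carrier := {F | ∃ k ∈ U, ∀ i : Fin n,
    (⇑(F i) : Tc → ℂ) =ᵐ[μ0] fun x => (⇑(w i) : Tc → ℂ) x * (⇑k : Tc → ℂ) x}
  add_mem' := by
    rintro a b ⟨k₁, hk₁, ha⟩ ⟨k₂, hk₂, hb⟩
    refine ⟨k₁ + k₂, U.add_mem hk₁ hk₂, fun i => ?_⟩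
    have hab : (a + b) i = a i + b i := rfl
    rw [hab]
    filter_upwards [ha i, hb i, Lp.coeFn_add (a i) (b i), Lp.coeFn_add k₁ k₂]
      with x h1 h2 h3 h4
    simp only [h3, Pi.add_apply, h1, h2, h4, mul_add]
  zero_mem' := by
    refine ⟨0, U.zero_mem, fun i => ?_⟩
    have h0 : (0 : Vec n) i = 0 := rfl
    rw [h0]
    filter_upwards [Lp.coeFn_zero ℂ 2 μ0] with x h1
    simp [h1]
  smul_mem' := by
    rintro c a ⟨k, hk, ha⟩
    refine ⟨c • k, U.smul_mem c hk, fun i => ?_⟩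
    have hc : (c • a) i = c • (a i) := rfl
    rw [hc]
    filter_upwards [ha i, Lp.coeFn_smul c (a i), Lp.coeFn_smul c k] with x h1 h2 h3
    simp only [h2, Pi.smul_apply, h1, h3, smul_eq_mul]
    ring

end Paper
namespace Paper

/-- The representation `F = F₀ k₀ + z ∑ⱼ kⱼ eⱼ` of Theorem 3.4(1): here the columns of `F₀`
are `W 0, …, W (r-1)`, the `eⱼ` are an orthonormal basis of the defect space, and the
parameter `k = (k₀, k₁, …, k_m)` runs through a subspace of `H²(𝔻, ℂ^{r+m})`. -/
def rep1 {n r m : ℕ} (W : Fin r → Vec n) (e : Fin m → Vec n) (k : Vec (r + m)) (F : Vec n) :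
    Prop :=
  ∀ i : Fin n,
    (⇑(F i) : Tc → ℂ) =ᵐ[μ0] fun x =>
      (∑ j : Fin r, (⇑(k (Fin.castAdd m j)) : Tc → ℂ) x * (⇑(W j i) : Tc → ℂ) x) +
        zf x * ∑ j : Fin m, (⇑(k (Fin.natAdd r j)) : Tc → ℂ) x * (⇑(e j i) : Tc → ℂ) x

/-- The representation `F = z ∑ⱼ kⱼ eⱼ` of Theorem 3.4(2). -/
def rep2 {n m : ℕ} (e : Fin m → Vec n) (k : Vec m) (F : Vec n) : Prop :=
  ∀ i : Fin n,
    (⇑(F i) : Tc → ℂ) =ᵐ[μ0] fun x =>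
      zf x * ∑ j : Fin m, (⇑(k j) : Tc → ℂ) x * (⇑(e j i) : Tc → ℂ) x

end Paper
namespace Paper

/-- The matrix symbol `G = [[conj θ, 0], [g, θ]]` associated with `A_g^θ`. -/
def Gmat (θ g : Tc → ℂ) : Matrix (Fin 2) (Fin 2) (Tc → ℂ) :=
  !![conjFun θ, 0; g, θ]

/-! If `f = w₁ k` with `k ∈ K_{zΦ}` and `f(0) = 0`, write `k = k(0) + z S*k`; then
`S*f = f/z = w₁ S*k + k(0) w₁/z`. The first summand lies in the kernel because model spaces
are `S*`-invariant, and the second lies in `H²` because `S*f` and `w₁ S*k` do, so it belongs to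
`span{w₁/z} ∩ H²`, a space of dimension at most one. -/

open scoped InnerProductSpace

lemma coeFn_mulLM {g : Tc → ℂ} (hg : MemLp g ⊤ μ0) (f : L2) :
    (⇑(mulLM g f) : Tc → ℂ) =ᵐ[μ0] fun x => g x * f x := by
  simp only [mulLM, dif_pos hg, LinearMap.coe_mk, AddHom.coe_mk]
  filter_upwards [MemLp.coeFn_toLp (MemLp.smul (r := 2) (Lp.memLp f) hg)] with x hx
  simpa using hx

lemma mulLM_mul {u v : Tc → ℂ} (hu : MemLp u ⊤ μ0) (hv : MemLp v ⊤ μ0) (f : L2) :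
    mulLM (fun x => u x * v x) f = mulLM u (mulLM v f) := by
  apply Lp.ext
  filter_upwards [coeFn_mulLM (hv.mul' hu) f, coeFn_mulLM hu (mulLM v f), coeFn_mulLM hv f]
    with x h1 h2 h3
  rw [h1, h2, h3, mul_assoc]

lemma mulLM_comm (u v : Tc → ℂ) (f : L2) : mulLM u (mulLM v f) = mulLM v (mulLM u f) := by
  by_cases hu : MemLp u ⊤ μ0
  · by_cases hv : MemLp v ⊤ μ0
    · apply Lp.ext
      filter_upwards [coeFn_mulLM hu (mulLM v f), coeFn_mulLM hv f,
        coeFn_mulLM hv (mulLM u f), coeFn_mulLM hu f] with x h1 h2 h3 h4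
      rw [h1, h2, h3, h4, mul_left_comm]
    · simp [mulLM, hv]
  · simp [mulLM, hu]

lemma inner_mulLM_right {g : Tc → ℂ} (hg : MemLp g ⊤ μ0) (a b : L2) :
    ⟪a, mulLM g b⟫_ℂ = ⟪mulLM (conjFun g) a, b⟫_ℂ := by
  rw [L2.inner_def, L2.inner_def]
  refine integral_congr_ae ?_
  filter_upwards [coeFn_mulLM hg b, coeFn_mulLM (memLp_conj hg) a] with x h1 h2
  rw [h1, h2]
  simp only [RCLike.inner_apply, conjFun, map_mul, Complex.conj_conj]
  ring

lemma zbar_mul_zf (x : Tc) : zbar x * zf x = 1 := by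
  rw [zf, zbar, ← fourier_add]
  norm_num

lemma conjFun_fourier (n : ℤ) : conjFun (fun x => fourier n x) = fun x => fourier (-n) x := by
  funext x
  exact (fourier_neg (n := n)).symm

lemma mulLM_zbar_zf (v : L2) : mulLM zbar (mulLM zf v) = v := by
  apply Lp.ext
  filter_upwards [coeFn_mulLM memLp_zbar (mulLM zf v), coeFn_mulLM memLp_zf v] with x h1 h2
  rw [h1, h2, ← mul_assoc, zbar_mul_zf, one_mul]

lemma mulLM_zf_zbar (v : L2) : mulLM zf (mulLM zbar v) = v := by
  apply Lp.ext
  filter_upwards [coeFn_mulLM memLp_zf (mulLM zbar v), coeFn_mulLM memLp_zbar v] with x h1 h2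
  rw [h1, h2, ← mul_assoc, mul_comm (zf x), zbar_mul_zf, one_mul]

lemma mulLM_zf_injective : Function.Injective (mulLM zf) :=
  Function.LeftInverse.injective mulLM_zbar_zf

lemma inner_mulLM_zf_mulLM_zf (a b : L2) : ⟪mulLM zf a, mulLM zf b⟫_ℂ = ⟪a, b⟫_ℂ := by
  rw [inner_mulLM_right memLp_zf, show conjFun zf = zbar from conjFun_fourier 1, mulLM_zbar_zf]

lemma cf_eq_inner (f : L2) (n : ℤ) : cf f n = ⟪(fourierBasis n : L2), f⟫_ℂ :=
  fourierBasis.repr_apply_apply f n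

lemma cf_eq_fourierCoeff (f : L2) (n : ℤ) : cf f n = fourierCoeff f n :=
  fourierBasis_repr f n

lemma cf_sub (a b : L2) (n : ℤ) : cf (a - b) n = cf a n - cf b n := by
  simp [cf]

lemma cf_smul (c : ℂ) (a : L2) (n : ℤ) : cf (c • a) n = c * cf a n := by
  simp [cf]

lemma cf_injective {a b : L2} (h : ∀ n, cf a n = cf b n) : a = b :=
  fourierBasis.repr.injective (lp.ext (funext h))

lemma cf_fourierBasis (m n : ℤ) : cf (fourierBasis m : L2) n = if n = m then 1 else 0 := by
  classical
  simp only [cf, coeffCLM, LinearMap.mkContinuous_apply, LinearMap.coe_mk, AddHom.coe_mk,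
    fourierBasis.repr_self]
  split_ifs with h
  · subst h; exact lp.single_apply_self 2 n 1
  · exact lp.single_apply_ne 2 m 1 h

lemma coeFn_fourierBasis (n : ℤ) :
    (⇑(fourierBasis n : L2) : Tc → ℂ) =ᵐ[μ0] fun x => fourier n x := by
  rw [coe_fourierBasis]
  exact coeFn_fourierLp 2 n

lemma mulLM_fourier_fourierBasis (m n : ℤ) :
    mulLM (fun x => fourier m x) (fourierBasis n : L2) = (fourierBasis (m + n) : L2) := by
  apply Lp.ext
  filter_upwards [coeFn_mulLM (memLp_fourier m) (fourierBasis n : L2), coeFn_fourierBasis n,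
    coeFn_fourierBasis (m + n)] with x h1 h2 h3
  rw [h1, h2, h3, fourier_add]

lemma cf_mulLM_fourier (m : ℤ) (f : L2) (n : ℤ) :
    cf (mulLM (fun x => fourier m x) f) n = cf f (n - m) := by
  rw [cf_eq_inner, inner_mulLM_right (memLp_fourier m), conjFun_fourier,
    mulLM_fourier_fourierBasis, ← cf_eq_inner, neg_add_eq_sub]

lemma cf_mulLM_zf (f : L2) (n : ℤ) : cf (mulLM zf f) n = cf f (n - 1) :=
  cf_mulLM_fourier 1 f n

lemma cf_mulLM_zbar (f : L2) (n : ℤ) : cf (mulLM zbar f) n = cf f (n + 1) := by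
  rw [← sub_neg_eq_add]
  exact cf_mulLM_fourier (-1) f n

lemma mem_H2_iff {f : L2} : f ∈ H2 ↔ ∀ n < 0, cf f n = 0 :=
  mem_coeffGE

lemma fourierBasis_mem_H2 {n : ℤ} (hn : 0 ≤ n) : (fourierBasis n : L2) ∈ H2 :=
  mem_H2_iff.mpr fun m hm => by rw [cf_fourierBasis, if_neg (by omega)]

lemma mulLM_zf_mem_H2 {f : L2} (hf : f ∈ H2) : mulLM zf f ∈ H2 :=
  mem_H2_iff.mpr fun n hn => by rw [cf_mulLM_zf]; exact mem_H2_iff.mp hf _ (by omega)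

lemma kerA_le_H2 (θ g : Tc → ℂ) : kerA θ g ≤ H2 :=
  inf_le_left.trans inf_le_left

lemma Kmod_le_H2 (u : Tc → ℂ) : Kmod u ≤ H2 :=
  inf_le_left

instance : CompleteSpace H2 := (isClosed_coeffGE 0).completeSpace_coe

lemma Pplus_mem_H2 (u : L2) : Pplus u ∈ H2 :=
  SetLike.coe_mem _

lemma Pplus_eq_self {u : L2} (hu : u ∈ H2) : Pplus u = u :=
  H2.starProjection_eq_self_iff.mpr hu

lemma cf_Pplus {n : ℤ} (hn : 0 ≤ n) (u : L2) : cf (Pplus u) n = cf u n := by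
  have horth : cf (u - Pplus u) n = 0 := by
    rw [cf_eq_inner]
    exact (Submodule.mem_orthogonal H2 _).mp (H2.sub_starProjection_mem_orthogonal u) _
      (fourierBasis_mem_H2 hn)
  rw [cf_sub, sub_eq_zero] at horth
  exact horth.symm

lemma cf_mulLM_conjFun_fourierBasis {u : Tc → ℂ} (hu : MemLp u ⊤ μ0) (n m : ℤ) :
    cf (mulLM (conjFun u) (fourierBasis n : L2)) m = conj (fourierCoeff u (n - m)) := by
  rw [cf_eq_fourierCoeff, fourierCoeff, fourierCoeff, ← integral_conj]
  refine integral_congr_ae ?_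
  filter_upwards [coeFn_mulLM (memLp_conj hu) (fourierBasis n : L2), coeFn_fourierBasis n]
    with x h1 h2
  rw [h1, h2, sub_eq_add_neg]
  simp only [smul_eq_mul, conjFun, fourier_add, fourier_neg, map_mul, Complex.conj_conj]
  ring

lemma thetaH2_le_H2 {u : Tc → ℂ} (hu : MemLp u ⊤ μ0)
    (hu_analytic : ∀ n < 0, fourierCoeff u n = 0) : thetaH2 u ≤ H2 := by
  rintro _ ⟨f, hf, rfl⟩
  refine mem_H2_iff.mpr fun n hn => ?_
  rw [cf_eq_inner, inner_mulLM_right hu, ← fourierBasis.tsum_inner_mul_inner]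
  refine (tsum_congr fun m => ?_).trans tsum_zero
  rcases lt_or_ge m 0 with hm | hm
  · rw [← cf_eq_inner, mem_H2_iff.mp hf m hm, mul_zero]
  · rw [← inner_conj_symm, ← cf_eq_inner, cf_mulLM_conjFun_fourierBasis hu,
      hu_analytic _ (by omega), map_zero, map_zero, zero_mul]

lemma thetaH2_zf_mul_le_H2 {Φ : Tc → ℂ} (hΦ : IsInner Φ) :
    thetaH2 (fun x => zf x * Φ x) ≤ H2 := by
  rintro _ ⟨f, hf, rfl⟩
  rw [mulLM_mul memLp_zf hΦ.memLinf]
  exact mulLM_zf_mem_H2 (thetaH2_le_H2 hΦ.memLinf hΦ.analytic ⟨f, hf, rfl⟩)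

lemma Sstar_mem_H2 (k : L2) : Sstar k ∈ H2 :=
  Pplus_mem_H2 _

lemma mulLM_zf_Sstar {k : L2} (hk : k ∈ H2) :
    mulLM zf (Sstar k) = k - cf k 0 • (fourierBasis 0 : L2) := by
  refine cf_injective fun n => ?_
  rw [cf_mulLM_zf, cf_sub, cf_smul, cf_fourierBasis]
  rcases lt_or_ge (n - 1) 0 with hn | hn
  · rw [mem_H2_iff.mp (Sstar_mem_H2 k) _ hn]
    rcases eq_or_ne n 0 with rfl | hn0
    · simp
    · rw [if_neg hn0, mem_H2_iff.mp hk n (by omega)]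
      ring
  · rw [Sstar, LinearMap.comp_apply, ContinuousLinearMap.coe_coe, cf_Pplus hn, cf_mulLM_zbar,
      sub_add_cancel, if_neg (by omega), mul_zero, sub_zero]

lemma coeFn_eq_zf_mul_Sstar_add {k : L2} (hk : k ∈ H2) :
    (⇑k : Tc → ℂ) =ᵐ[μ0] fun x => zf x * Sstar k x + cf k 0 := by
  have hdecomp : (⇑k : Tc → ℂ) = ⇑(mulLM zf (Sstar k) + cf k 0 • (fourierBasis 0 : L2)) := by
    rw [mulLM_zf_Sstar hk, sub_add_cancel]
  filter_upwards [Lp.coeFn_add (mulLM zf (Sstar k)) (cf k 0 • (fourierBasis 0 : L2)),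
    Lp.coeFn_smul (cf k 0) (fourierBasis 0 : L2), coeFn_mulLM memLp_zf (Sstar k),
    coeFn_fourierBasis 0] with x h1 h2 h3 h4
  rw [hdecomp, h1, Pi.add_apply, h2, h3, Pi.smul_apply, h4, fourier_zero, smul_eq_mul, mul_one]

lemma Sstar_eq_mulLM_zbar {f : L2} (hf : f ∈ H2) (hf0 : cf f 0 = 0) : Sstar f = mulLM zbar f := by
  refine Pplus_eq_self (mem_H2_iff.mpr fun n hn => ?_)
  rw [cf_mulLM_zbar]
  rcases (show n + 1 ≤ 0 by omega).eq_or_lt with h | h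
  · rwa [h]
  · exact mem_H2_iff.mp hf _ h

lemma Sstar_mem_Kmod {u : Tc → ℂ} (hu : thetaH2 u ≤ H2) {k : L2} (hk : k ∈ Kmod u) :
    Sstar k ∈ Kmod u := by
  refine ⟨Sstar_mem_H2 k, (Submodule.mem_orthogonal _ _).mpr ?_⟩
  rintro _ ⟨p, hp, rfl⟩
  have hup : mulLM u p ∈ H2 := hu ⟨p, hp, rfl⟩
  have hk_orth : ⟪mulLM zf (mulLM u p), k⟫_ℂ = 0 := by
    rw [mulLM_comm]
    exact (Submodule.mem_orthogonal _ _).mp hk.2 _ ⟨_, mulLM_zf_mem_H2 hp, rfl⟩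
  have hconst_orth : ⟪mulLM zf (mulLM u p), (fourierBasis 0 : L2)⟫_ℂ = 0 := by
    rw [← inner_conj_symm, ← cf_eq_inner, cf_mulLM_zf, mem_H2_iff.mp hup _ (by norm_num),
      map_zero]
  rw [← inner_mulLM_zf_mulLM_zf, mulLM_zf_Sstar (Kmod_le_H2 u hk), inner_sub_right,
    inner_smul_right, hk_orth, hconst_orth, mul_zero, sub_zero]

theorem Sstar_mem_mulSet_sup_of_cf_zero {w : L2} {U : Submodule ℂ L2} (hU : U ≤ H2)
    (hSU : ∀ k ∈ U, Sstar k ∈ U) (hM : mulSet w U ≤ H2) {f : L2} (hf : f ∈ mulSet w U)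
    (hf0 : cf f 0 = 0) :
    Sstar f ∈ mulSet w U ⊔ (H2 ⊓ (Submodule.span ℂ {w}).comap (mulLM zf)) := by
  have hSf : Sstar f = mulLM zbar f := Sstar_eq_mulLM_zbar (hM hf) hf0
  obtain ⟨k, hk, hfk⟩ := hf
  set c := cf k 0
  have hq : mulLM zbar f - c • mulLM zbar w ∈ mulSet w U := by
    refine ⟨Sstar k, hSU k hk, ?_⟩
    filter_upwards [Lp.coeFn_sub (mulLM zbar f) (c • mulLM zbar w),
      Lp.coeFn_smul c (mulLM zbar w), coeFn_mulLM memLp_zbar f, coeFn_mulLM memLp_zbar w, hfk,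
      coeFn_eq_zf_mul_Sstar_add (hU hk)] with x h1 h2 h3 h4 h5 h6
    rw [h1, Pi.sub_apply, h2, Pi.smul_apply, h3, h4, h5, h6, smul_eq_mul]
    linear_combination (w x * Sstar k x) * zbar_mul_zf x
  have hdefect : c • mulLM zbar w ∈ H2 ⊓ (Submodule.span ℂ {w}).comap (mulLM zf) := by
    refine Submodule.mem_inf.mpr ⟨?_, ?_⟩
    · rw [← sub_sub_cancel (mulLM zbar f) (c • mulLM zbar w)]
      exact sub_mem (hSf ▸ Sstar_mem_H2 f) (hM hq)
    · rw [Submodule.mem_comap, map_smul, mulLM_zf_zbar]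
      exact Submodule.smul_mem _ c (Submodule.mem_span_singleton_self w)
  rw [hSf, ← sub_add_cancel (mulLM zbar f) (c • mulLM zbar w)]
  exact Submodule.add_mem_sup hq hdefect

lemma finrank_inf_comap_span_singleton_le_one {R M N : Type*} [Ring R] [StrongRankCondition R]
    [AddCommGroup M] [Module R M] [AddCommGroup N] [Module R N] {T : M →ₗ[R] N}
    (hT : Function.Injective T) (p : Submodule R M) (w : N) :
    Module.finrank R ↥(p ⊓ (Submodule.span R {w}).comap T) ≤ 1 := by
  let T' := T.restrict (p := p ⊓ (Submodule.span R {w}).comap T) (q := Submodule.span R {w})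
    fun _ hx => hx.2
  have hT' : Function.Injective T' := fun a b hab => Subtype.ext (hT (congrArg Subtype.val hab))
  calc Module.finrank R ↥(p ⊓ (Submodule.span R {w}).comap T)
      ≤ Module.finrank R ↥(Submodule.span R {w}) := LinearMap.finrank_le_finrank_of_injective hT'
    _ ≤ 1 := by simpa using finrank_span_le_card (R := R) ({w} : Set N)

theorem kernel_truncated_toeplitz_nearly_invariant_defect_one_general
    (θ g : Tc → ℂ)
    (w : Vec 2)
    (Φ : Tc → ℂ) (hΦ : IsInner Φ)
    (hrep : kerA θ g = mulSet (⇑(w 0)) (Kmod fun x => zf x * Φ x)) :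
    (∀ f ∈ kerA θ g, cf f 0 = 0 →
        Sstar f ∈ kerA θ g ⊔
          (H2 ⊓ (Submodule.span ℂ {w 0}).comap (mulLM zf))) ∧
      Module.finrank ℂ ↥(H2 ⊓ (Submodule.span ℂ {w 0}).comap (mulLM zf)) ≤ 1 := by
  refine ⟨fun f hf hf0 => ?_, finrank_inf_comap_span_singleton_le_one mulLM_zf_injective _ _⟩
  rw [hrep] at hf ⊢
  exact Sstar_mem_mulSet_sup_of_cf_zero (Kmod_le_H2 _)
    (fun k hk => Sstar_mem_Kmod (thetaH2_zf_mul_le_H2 hΦ) hk) (hrep ▸ kerA_le_H2 θ g) hf hf0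

/-- **(Section 4).**  With `ker A_g^θ = w₁·K_{zΦ}` as in (4.1), the kernel of the
truncated Toeplitz operator is nearly `S*`-invariant with defect space
`span{w₁/z} ∩ H²` (in particular of defect at most `1`). -/
theorem kernel_truncated_toeplitz_nearly_invariant_defect_one
    (θ g : Tc → ℂ) (hθ : IsInner θ) (hg : MemLp g ⊤ μ0)
    (hker : kerA θ g ≠ ⊥)
    (w : Vec 2)
    (hw : w ∈ kerT (Gmat θ g) ⊓ (kerT (Gmat θ g) ⊓ coeffGEv 2 1)ᗮ) (hwn : ‖w‖ = 1)
    (Φ : Tc → ℂ) (hΦ : IsInner Φ)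
    (hrep : kerA θ g = mulSet (⇑(w 0)) (Kmod fun x => zf x * Φ x)) :
    (∀ f ∈ kerA θ g, cf f 0 = 0 →
        Sstar f ∈ kerA θ g ⊔
          (H2 ⊓ (Submodule.span ℂ {w 0}).comap (mulLM zf))) ∧
      Module.finrank ℂ ↥(H2 ⊓ (Submodule.span ℂ {w 0}).comap (mulLM zf)) ≤ 1 :=
  kernel_truncated_toeplitz_nearly_invariant_defect_one_general θ g w Φ hΦ hrep

end Paper
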